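/- Let (A, r) be a coquasitriangular Hopf algebra over ℂ and let r̂ := r̄₄₁ r̄₃₁ r₂₄ r₂₃ be the universal r-form on the quantum double A⋈A. Then for all a,b,c,d ∈ A one has r̂((a⊗b)⊗(c⊗d)) = r̄(c₍₁₎d₍₁₎ ⊗ a) · r(b ⊗ c₍₂₎d₍₂₎) = ⟨θ(a⊗b), cd⟩, where θ(a⊗b) := l⁺(S⁻¹(a)) l⁻(S⁻¹(b)). -/

import Mathlib

/-! ## Preliminaries: coquasitriangular Hopf algebras, l-functionals, and the
universal r-form `r̂ = r̄₄₁ r̄₃₁ r₂₄ r₂₃` on the quantum double `A ⋈ A`.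

Throughout, `A` is a Hopf algebra over `ℂ`.  Linear functionals on a coalgebra are
multiplied by the convolution product; the quantum double `A ⋈ A` has the tensor
product *coalgebra* structure (which is all that is needed to define `r̂` and the
l-functionals), its carrier being `A ⊗[ℂ] A`. -/

open scoped TensorProduct

noncomputable section

namespace FRTPaper

variable {B : Type} [AddCommGroup B] [Module ℂ B]

/-- Convolution product of two linear functionals on a coalgebra `B`:
`(f * g)(b) = Σ f(b₍₁₎) g(b₍₂₎)`. -/
def conv [Coalgebra ℂ B] (f g : B →ₗ[ℂ] ℂ) : B →ₗ[ℂ] ℂ :=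
  (LinearMap.mul' ℂ ℂ) ∘ₗ (TensorProduct.map f g) ∘ₗ Coalgebra.comul

/-- `lcurry μ a = μ(· ⊗ a)`. -/
def lcurry (μ : B ⊗[ℂ] B →ₗ[ℂ] ℂ) (a : B) : B →ₗ[ℂ] ℂ :=
  μ ∘ₗ (TensorProduct.mk ℂ B B).flip a

/-- `rcurry μ a = μ(a ⊗ ·)`. -/
def rcurry (μ : B ⊗[ℂ] B →ₗ[ℂ] ℂ) (a : B) : B →ₗ[ℂ] ℂ :=
  μ ∘ₗ TensorProduct.mk ℂ B B a

variable (A : Type) [Ring A] [HopfAlgebra ℂ A]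

/-- A coquasitriangular structure (universal r-form) on the Hopf algebra `A`:
a convolution-invertible functional `r` on `A ⊗ A` (with convolution-inverse `rbar`)
satisfying `r(ab⊗c) = r(a⊗c₍₁₎)r(b⊗c₍₂₎)`, `r(a⊗bc) = r(a₍₁₎⊗c)r(a₍₂₎⊗b)`, and
`r(a₍₁₎⊗b₍₁₎) a₍₂₎b₍₂₎ = b₍₁₎a₍₁₎ r(a₍₂₎⊗b₍₂₎)`. -/
structure CQT where
  r : A ⊗[ℂ] A →ₗ[ℂ] ℂ
  rbar : A ⊗[ℂ] A →ₗ[ℂ] ℂ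
  conv_inv_left : conv r rbar = (Coalgebra.counit : A ⊗[ℂ] A →ₗ[ℂ] ℂ)
  conv_inv_right : conv rbar r = (Coalgebra.counit : A ⊗[ℂ] A →ₗ[ℂ] ℂ)
  r_mul_left : ∀ a b c : A,
    r ((a * b) ⊗ₜ[ℂ] c)
      = (LinearMap.mul' ℂ ℂ) ((TensorProduct.map (rcurry r a) (rcurry r b))
          (Coalgebra.comul c))
  r_mul_right : ∀ a b c : A,
    r (a ⊗ₜ[ℂ] (b * c))
      = (LinearMap.mul' ℂ ℂ) ((TensorProduct.map (lcurry r c) (lcurry r b))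
          (Coalgebra.comul a))
  r_commute : ∀ a b : A,
    (TensorProduct.lid ℂ A)
        ((TensorProduct.map r (LinearMap.mul' ℂ A))
          (Coalgebra.comul (a ⊗ₜ[ℂ] b)))
      = (TensorProduct.rid ℂ A)
        ((TensorProduct.map ((LinearMap.mul' ℂ A) ∘ₗ
            (TensorProduct.comm ℂ A A).toLinearMap) r)
          (Coalgebra.comul (a ⊗ₜ[ℂ] b)))

variable {A}

/-- The l-functional `l⁺(a) = r(· ⊗ a)`. -/
def lp (q : CQT A) (a : A) : A →ₗ[ℂ] ℂ := lcurry q.r a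

/-- The l-functional `l⁻(a) = r̄(a ⊗ ·)`. -/
def lm (q : CQT A) (a : A) : A →ₗ[ℂ] ℂ := rcurry q.rbar a

/-- `a ⊗ b ↦ ε(b) a`. -/
def pr1 : A ⊗[ℂ] A →ₗ[ℂ] A :=
  (TensorProduct.rid ℂ A).toLinearMap ∘ₗ
    TensorProduct.map LinearMap.id (Coalgebra.counit : A →ₗ[ℂ] ℂ)

/-- `a ⊗ b ↦ ε(a) b`. -/
def pr2 : A ⊗[ℂ] A →ₗ[ℂ] A :=
  (TensorProduct.lid ℂ A).toLinearMap ∘ₗ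
    TensorProduct.map (Coalgebra.counit : A →ₗ[ℂ] ℂ) LinearMap.id

/-- The "leg" functional `s₄₁` on `(A⊗A)⊗(A⊗A)`: `(a⊗b)⊗(c⊗d) ↦ ε(b) ε(c) s(d ⊗ a)`. -/
def leg41 (s : A ⊗[ℂ] A →ₗ[ℂ] ℂ) : (A ⊗[ℂ] A) ⊗[ℂ] (A ⊗[ℂ] A) →ₗ[ℂ] ℂ :=
  s ∘ₗ (TensorProduct.comm ℂ A A).toLinearMap ∘ₗ TensorProduct.map pr1 pr2

/-- `s₃₁ : (a⊗b)⊗(c⊗d) ↦ ε(b) ε(d) s(c ⊗ a)`. -/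
def leg31 (s : A ⊗[ℂ] A →ₗ[ℂ] ℂ) : (A ⊗[ℂ] A) ⊗[ℂ] (A ⊗[ℂ] A) →ₗ[ℂ] ℂ :=
  s ∘ₗ (TensorProduct.comm ℂ A A).toLinearMap ∘ₗ TensorProduct.map pr1 pr1

/-- `s₂₄ : (a⊗b)⊗(c⊗d) ↦ ε(a) ε(c) s(b ⊗ d)`. -/
def leg24 (s : A ⊗[ℂ] A →ₗ[ℂ] ℂ) : (A ⊗[ℂ] A) ⊗[ℂ] (A ⊗[ℂ] A) →ₗ[ℂ] ℂ :=
  s ∘ₗ TensorProduct.map pr2 pr2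

/-- `s₂₃ : (a⊗b)⊗(c⊗d) ↦ ε(a) ε(d) s(b ⊗ c)`. -/
def leg23 (s : A ⊗[ℂ] A →ₗ[ℂ] ℂ) : (A ⊗[ℂ] A) ⊗[ℂ] (A ⊗[ℂ] A) →ₗ[ℂ] ℂ :=
  s ∘ₗ TensorProduct.map pr2 pr1

/-- The universal r-form `r̂ = r̄₄₁ r̄₃₁ r₂₄ r₂₃` on the quantum double `A ⋈ A`
(the product being convolution of functionals on the tensor product coalgebra
`(A⊗A) ⊗ (A⊗A)`), so that
`r̂((a⊗b)⊗(c⊗d)) = r̄(d₍₁₎⊗a₍₁₎) r̄(c₍₁₎⊗a₍₂₎) r(b₍₁₎⊗d₍₂₎) r(b₍₂₎⊗c₍₂₎)`. -/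
def rhat (q : CQT A) : (A ⊗[ℂ] A) ⊗[ℂ] (A ⊗[ℂ] A) →ₗ[ℂ] ℂ :=
  conv (conv (conv (leg41 q.rbar) (leg31 q.rbar)) (leg24 q.r)) (leg23 q.r)

/-- The convolution inverse `r̂⁻ = r̄₂₃ r̄₂₄ r₃₁ r₄₁` of `r̂`, i.e.
`r̂⁻((a⊗b)⊗(c⊗d)) = r̄(b₍₁₎⊗c₍₁₎) r̄(b₍₂₎⊗d₍₁₎) r(c₍₂₎⊗a₍₁₎) r(d₍₂₎⊗a₍₂₎)`. -/
def rhatInv (q : CQT A) : (A ⊗[ℂ] A) ⊗[ℂ] (A ⊗[ℂ] A) →ₗ[ℂ] ℂ :=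
  conv (conv (conv (leg23 q.rbar) (leg24 q.rbar)) (leg31 q.r)) (leg41 q.r)

end FRTPaper

namespace FRTPaper

variable {B : Type} [AddCommGroup B] [Module ℂ B]

section Engine

variable {M : Type} [Ring M] [Algebra ℂ M]
variable [Coalgebra ℂ B]

/-- convolution with values in an algebra. -/
def aconv (f g : B →ₗ[ℂ] M) : B →ₗ[ℂ] M :=
  (LinearMap.mul' ℂ M) ∘ₗ (TensorProduct.map f g) ∘ₗ Coalgebra.comul

lemma conv_eq_aconv (f g : B →ₗ[ℂ] ℂ) : conv f g = aconv f g := rfl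

lemma aconv_repr (f g : B →ₗ[ℂ] M) {x : B} {ι : Type*} (rp : Coalgebra.Repr ℂ x ι) :
    aconv f g x = ∑ i ∈ rp.index, f (rp.left i) * g (rp.right i) := by
  simp only [aconv, LinearMap.coe_comp, Function.comp_apply, ← rp.eq, map_sum,
    TensorProduct.map_tmul, LinearMap.mul'_apply]

lemma conv_repr (f g : B →ₗ[ℂ] ℂ) {x : B} {ι : Type*} (rp : Coalgebra.Repr ℂ x ι) :
    conv f g x = ∑ i ∈ rp.index, f (rp.left i) * g (rp.right i) :=
  aconv_repr f g rp

/-- the unit of the convolution algebra. -/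
def cunit : B →ₗ[ℂ] M := (Algebra.linearMap ℂ M) ∘ₗ Coalgebra.counit

lemma cunit_eq_counit : (cunit : B →ₗ[ℂ] ℂ) = Coalgebra.counit := by
  ext x; simp [cunit]

lemma aconv_cunit_right (f : B →ₗ[ℂ] M) : aconv f cunit = f := by
  ext x
  have h1 : (TensorProduct.map f (cunit (B := B) (M := M))) (Coalgebra.comul x)
      = (TensorProduct.map f (Algebra.linearMap ℂ M))
          ((LinearMap.lTensor B (Coalgebra.counit (R := ℂ))) (Coalgebra.comul x)) := by
    rw [show TensorProduct.map f (cunit (B := B) (M := M))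
        = TensorProduct.map f (Algebra.linearMap ℂ M) ∘ₗ
            LinearMap.lTensor B (Coalgebra.counit (R := ℂ)) by
      ext t; simp [cunit]]
    rfl
  simp only [aconv, LinearMap.coe_comp, Function.comp_apply, h1,
    Coalgebra.lTensor_counit_comul]
  simp

lemma aconv_cunit_left (f : B →ₗ[ℂ] M) : aconv cunit f = f := by
  ext x
  have h1 : (TensorProduct.map (cunit (B := B) (M := M)) f) (Coalgebra.comul x)
      = (TensorProduct.map (Algebra.linearMap ℂ M) f)
          ((LinearMap.rTensor B (Coalgebra.counit (R := ℂ))) (Coalgebra.comul x)) := by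
    rw [show TensorProduct.map (cunit (B := B) (M := M)) f
        = TensorProduct.map (Algebra.linearMap ℂ M) f ∘ₗ
            LinearMap.rTensor B (Coalgebra.counit (R := ℂ)) by
      ext t; simp [cunit]]
    rfl
  simp only [aconv, LinearMap.coe_comp, Function.comp_apply, h1,
    Coalgebra.rTensor_counit_comul]
  simp

lemma aconv_assoc (f g h : B →ₗ[ℂ] M) : aconv (aconv f g) h = aconv f (aconv g h) := by
  ext x
  classical
  set rp := Coalgebra.Repr.arbitrary ℂ x with hrp
  set a₁ : (i : B × B) → Coalgebra.Repr ℂ (rp.left i) (B × B) := fun i => Coalgebra.Repr.arbitrary ℂ _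
  set a₂ : (i : B × B) → Coalgebra.Repr ℂ (rp.right i) (B × B) := fun i => Coalgebra.Repr.arbitrary ℂ _
  have key := Coalgebra.sum_tmul_tmul_eq rp a₁ a₂
  have keyT := congrArg (fun t => ((LinearMap.mul' ℂ M) ∘ₗ
      (TensorProduct.map f ((LinearMap.mul' ℂ M) ∘ₗ TensorProduct.map g h))) t) key
  simp only [map_sum, LinearMap.coe_comp, Function.comp_apply, TensorProduct.map_tmul,
    LinearMap.mul'_apply] at keyT
  calc aconv (aconv f g) h x
      = ∑ i ∈ rp.index, (aconv f g) (rp.left i) * h (rp.right i) := aconv_repr _ _ rp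
    _ = ∑ i ∈ rp.index, ∑ j ∈ (a₁ i).index,
          f ((a₁ i).left j) * (g ((a₁ i).right j) * h (rp.right i)) := by
        refine Finset.sum_congr rfl fun i _ => ?_
        rw [aconv_repr _ _ (a₁ i), Finset.sum_mul]
        simp [mul_assoc]
    _ = ∑ i ∈ rp.index, ∑ j ∈ (a₂ i).index,
          f (rp.left i) * (g ((a₂ i).left j) * h ((a₂ i).right j)) := keyT
    _ = ∑ i ∈ rp.index, f (rp.left i) * (aconv g h) (rp.right i) := by
        refine Finset.sum_congr rfl fun i _ => ?_
        rw [aconv_repr _ _ (a₂ i), Finset.mul_sum]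
    _ = aconv f (aconv g h) x := (aconv_repr _ _ rp).symm

lemma conv_assoc (f g h : B →ₗ[ℂ] ℂ) : conv (conv f g) h = conv f (conv g h) := by
  simp only [conv_eq_aconv]; exact aconv_assoc f g h

lemma conv_counit_right (f : B →ₗ[ℂ] ℂ) : conv f Coalgebra.counit = f := by
  rw [conv_eq_aconv, ← cunit_eq_counit, aconv_cunit_right]

lemma conv_counit_left (f : B →ₗ[ℂ] ℂ) : conv Coalgebra.counit f = f := by
  rw [conv_eq_aconv, ← cunit_eq_counit, aconv_cunit_left]

lemma conv_inv_unique {f g h : B →ₗ[ℂ] ℂ}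
    (hfg : conv f g = Coalgebra.counit) (hgh : conv g h = Coalgebra.counit) : f = h := by
  have : conv f (conv g h) = conv (conv f g) h := (conv_assoc f g h).symm
  rw [hfg, hgh, conv_counit_right, conv_counit_left] at this
  exact this

end Engine

section Collapse
variable {B : Type} [AddCommGroup B] [Module ℂ B] [Coalgebra ℂ B]
variable {M : Type} [AddCommGroup M] [Module ℂ M]

lemma sum_counit_smul {x : B} {ι : Type*} (rp : Coalgebra.Repr ℂ x ι) (f : B →ₗ[ℂ] M) :
    ∑ i ∈ rp.index, Coalgebra.counit (R := ℂ) (rp.left i) • f (rp.right i) = f x := by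
  have h := Coalgebra.sum_counit_tmul_eq rp
  have h2 : ((TensorProduct.lid ℂ M).toLinearMap ∘ₗ LinearMap.lTensor ℂ f)
        (∑ i ∈ rp.index, Coalgebra.counit (R := ℂ) (rp.left i) ⊗ₜ[ℂ] rp.right i)
      = ((TensorProduct.lid ℂ M).toLinearMap ∘ₗ LinearMap.lTensor ℂ f) ((1 : ℂ) ⊗ₜ[ℂ] x) := by
    rw [h]
  simp only [map_sum, LinearMap.coe_comp, LinearEquiv.coe_coe, Function.comp_apply,
    LinearMap.lTensor_tmul, TensorProduct.lid_tmul, one_smul] at h2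
  exact h2

lemma sum_smul_counit {x : B} {ι : Type*} (rp : Coalgebra.Repr ℂ x ι) (f : B →ₗ[ℂ] M) :
    ∑ i ∈ rp.index, Coalgebra.counit (R := ℂ) (rp.right i) • f (rp.left i) = f x := by
  have h := Coalgebra.sum_tmul_counit_eq rp
  have h2 : ((TensorProduct.rid ℂ M).toLinearMap ∘ₗ LinearMap.rTensor ℂ f)
        (∑ i ∈ rp.index, rp.left i ⊗ₜ[ℂ] Coalgebra.counit (R := ℂ) (rp.right i))
      = ((TensorProduct.rid ℂ M).toLinearMap ∘ₗ LinearMap.rTensor ℂ f) (x ⊗ₜ[ℂ] (1 : ℂ)) := by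
    rw [h]
  simp only [map_sum, LinearMap.coe_comp, LinearEquiv.coe_coe, Function.comp_apply,
    LinearMap.rTensor_tmul, TensorProduct.rid_tmul, one_smul] at h2
  exact h2

lemma sum_counit_mul {x : B} {ι : Type*} (rp : Coalgebra.Repr ℂ x ι) (f : B →ₗ[ℂ] ℂ) :
    ∑ i ∈ rp.index, Coalgebra.counit (R := ℂ) (rp.left i) * f (rp.right i) = f x := by
  simpa [smul_eq_mul] using sum_counit_smul rp f

lemma sum_mul_counit {x : B} {ι : Type*} (rp : Coalgebra.Repr ℂ x ι) (f : B →ₗ[ℂ] ℂ) :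
    ∑ i ∈ rp.index, f (rp.left i) * Coalgebra.counit (R := ℂ) (rp.right i) = f x := by
  have := sum_smul_counit rp f
  simpa [smul_eq_mul, mul_comm] using this

end Collapse

section Reprs
variable {B B' : Type} [AddCommGroup B] [Module ℂ B] [AddCommGroup B'] [Module ℂ B']
  [Coalgebra ℂ B] [Coalgebra ℂ B']

/-- Representation of `comul (x ⊗ₜ y)` from representations of `comul x`, `comul y`. -/
@[reducible] def tprodRepr {x : B} {y : B'} {ι κ : Type*} (rx : Coalgebra.Repr ℂ x ι) (ry : Coalgebra.Repr ℂ y κ) :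
    Coalgebra.Repr ℂ (x ⊗ₜ[ℂ] y) (ι × κ) where
  index := rx.index ×ˢ ry.index
  left := fun p => rx.left p.1 ⊗ₜ[ℂ] ry.left p.2
  right := fun p => rx.right p.1 ⊗ₜ[ℂ] ry.right p.2
  eq := by
    rw [Finset.sum_product]
    show _ = Coalgebra.comul (R := ℂ) (x ⊗ₜ[ℂ] y)
    rw [TensorProduct.comul_tmul, ← rx.eq, ← ry.eq]
    simp only [TensorProduct.sum_tmul, TensorProduct.tmul_sum, map_sum,
      TensorProduct.AlgebraTensorModule.tensorTensorTensorComm_tmul]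
    rw [Finset.sum_comm]

lemma comul_tmul_eq {x : B} {y : B'} {ι κ : Type*} (rx : Coalgebra.Repr ℂ x ι) (ry : Coalgebra.Repr ℂ y κ) :
    Coalgebra.comul (R := ℂ) (x ⊗ₜ[ℂ] y)
      = ∑ p ∈ rx.index ×ˢ ry.index,
          (rx.left p.1 ⊗ₜ[ℂ] ry.left p.2) ⊗ₜ[ℂ] (rx.right p.1 ⊗ₜ[ℂ] ry.right p.2) :=
  (tprodRepr rx ry).eq.symm

end Reprs

section MulRepr
variable {A : Type} [Ring A] [HopfAlgebra ℂ A]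

/-- Representation of `comul (x * y)` in a bialgebra. -/
@[reducible] def mulRepr {x y : A} {ι κ : Type*} (rx : Coalgebra.Repr ℂ x ι) (ry : Coalgebra.Repr ℂ y κ) :
    Coalgebra.Repr ℂ (x * y) (ι × κ) where
  index := rx.index ×ˢ ry.index
  left := fun p => rx.left p.1 * ry.left p.2
  right := fun p => rx.right p.1 * ry.right p.2
  eq := by
    rw [Finset.sum_product]
    show _ = Coalgebra.comul (R := ℂ) (x * y)
    rw [Bialgebra.comul_mul, ← rx.eq, ← ry.eq, Finset.sum_mul_sum]
    simp only [Algebra.TensorProduct.tmul_mul_tmul]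

end MulRepr

end FRTPaper

namespace FRTPaper
section CoalgMap

variable {B B' B'' : Type} [AddCommGroup B] [Module ℂ B] [AddCommGroup B'] [Module ℂ B']
  [AddCommGroup B''] [Module ℂ B'']

def IsCoalgMap [Coalgebra ℂ B] [Coalgebra ℂ B'] (φ : B →ₗ[ℂ] B') : Prop :=
  (Coalgebra.comul ∘ₗ φ = TensorProduct.map φ φ ∘ₗ Coalgebra.comul) ∧
  (Coalgebra.counit ∘ₗ φ = Coalgebra.counit)

variable [Coalgebra ℂ B] [Coalgebra ℂ B'] [Coalgebra ℂ B'']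

lemma conv_comp {φ : B →ₗ[ℂ] B'} (hφ : IsCoalgMap φ) (f g : B' →ₗ[ℂ] ℂ) :
    conv (f ∘ₗ φ) (g ∘ₗ φ) = (conv f g) ∘ₗ φ := by
  unfold conv
  rw [TensorProduct.map_comp, LinearMap.comp_assoc, LinearMap.comp_assoc, ← hφ.1]
  rfl

lemma counit_comp_eq {φ : B →ₗ[ℂ] B'} (hφ : IsCoalgMap φ) :
    (Coalgebra.counit : B' →ₗ[ℂ] ℂ) ∘ₗ φ = Coalgebra.counit := hφ.2

lemma IsCoalgMap.id : IsCoalgMap (LinearMap.id : B →ₗ[ℂ] B) := by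
  constructor
  · rw [TensorProduct.map_id]; rfl
  · rfl

lemma IsCoalgMap.comp {φ : B →ₗ[ℂ] B'} {χ : B' →ₗ[ℂ] B''}
    (hχ : IsCoalgMap χ) (hφ : IsCoalgMap φ) : IsCoalgMap (χ ∘ₗ φ) := by
  constructor
  · rw [← LinearMap.comp_assoc, hχ.1, LinearMap.comp_assoc, hφ.1,
      ← LinearMap.comp_assoc, ← TensorProduct.map_comp]
  · rw [← LinearMap.comp_assoc, hχ.2, hφ.2]

end CoalgMap
end FRTPaper

namespace FRTPaper
section TensorCoalgMap

variable {B1 B2 B3 B4 B1' B2' : Type}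
  [AddCommGroup B1] [Module ℂ B1] [AddCommGroup B2] [Module ℂ B2]
  [AddCommGroup B3] [Module ℂ B3] [AddCommGroup B4] [Module ℂ B4]
  [AddCommGroup B1'] [Module ℂ B1'] [AddCommGroup B2'] [Module ℂ B2']

lemma ttt_natural (f1 : B1 →ₗ[ℂ] B1') (f2 : B2 →ₗ[ℂ] B1') (g1 : B3 →ₗ[ℂ] B2')
    (g2 : B4 →ₗ[ℂ] B2') :
    (TensorProduct.map (TensorProduct.map f1 g1) (TensorProduct.map f2 g2)) ∘ₗ
        (TensorProduct.tensorTensorTensorComm ℂ B1 B2 B3 B4).toLinearMap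
      = (TensorProduct.tensorTensorTensorComm ℂ B1' B1' B2' B2').toLinearMap ∘ₗ
        TensorProduct.map (TensorProduct.map f1 f2) (TensorProduct.map g1 g2) := by
  apply TensorProduct.ext_fourfold'
  intro a b c d
  simp [TensorProduct.tensorTensorTensorComm_tmul]

variable [Coalgebra ℂ B1] [Coalgebra ℂ B2] [Coalgebra ℂ B1'] [Coalgebra ℂ B2']

lemma IsCoalgMap.tmap {φ : B1 →ₗ[ℂ] B1'} {χ : B2 →ₗ[ℂ] B2'}
    (hφ : IsCoalgMap φ) (hχ : IsCoalgMap χ) : IsCoalgMap (TensorProduct.map φ χ) := by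
  constructor
  · show (TensorProduct.tensorTensorTensorComm ℂ B1' B1' B2' B2').toLinearMap ∘ₗ
        TensorProduct.map Coalgebra.comul Coalgebra.comul ∘ₗ TensorProduct.map φ χ
      = TensorProduct.map (TensorProduct.map φ χ) (TensorProduct.map φ χ) ∘ₗ
        ((TensorProduct.tensorTensorTensorComm ℂ B1 B1 B2 B2).toLinearMap ∘ₗ
          TensorProduct.map Coalgebra.comul Coalgebra.comul)
    rw [← TensorProduct.map_comp, hφ.1, hχ.1, TensorProduct.map_comp,
      ← LinearMap.comp_assoc, ← ttt_natural, LinearMap.comp_assoc]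
  · apply TensorProduct.ext'
    intro x y
    have h1 := LinearMap.congr_fun hφ.2 x
    have h2 := LinearMap.congr_fun hχ.2 y
    simp only [LinearMap.comp_apply] at h1 h2
    simp only [LinearMap.comp_apply, TensorProduct.map_tmul, TensorProduct.counit_tmul, h1, h2]

lemma IsCoalgMap.comm :
    IsCoalgMap ((TensorProduct.comm ℂ B1 B2).toLinearMap) := by
  constructor
  · show (TensorProduct.tensorTensorTensorComm ℂ B2 B2 B1 B1).toLinearMap ∘ₗ
        TensorProduct.map Coalgebra.comul Coalgebra.comul ∘ₗ
          (TensorProduct.comm ℂ B1 B2).toLinearMap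
      = TensorProduct.map (TensorProduct.comm ℂ B1 B2).toLinearMap
          (TensorProduct.comm ℂ B1 B2).toLinearMap ∘ₗ
        ((TensorProduct.tensorTensorTensorComm ℂ B1 B1 B2 B2).toLinearMap ∘ₗ
          TensorProduct.map Coalgebra.comul Coalgebra.comul)
    have h1 : TensorProduct.map (Coalgebra.comul (R := ℂ) (A := B2))
          (Coalgebra.comul (R := ℂ) (A := B1)) ∘ₗ (TensorProduct.comm ℂ B1 B2).toLinearMap
        = (TensorProduct.comm ℂ (B1 ⊗[ℂ] B1) (B2 ⊗[ℂ] B2)).toLinearMap ∘ₗ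
          TensorProduct.map Coalgebra.comul Coalgebra.comul := by
      apply TensorProduct.ext'
      intro x y
      simp
    rw [h1, ← LinearMap.comp_assoc, ← LinearMap.comp_assoc]
    congr 1
    apply TensorProduct.ext_fourfold'
    intro a b c d
    simp [TensorProduct.tensorTensorTensorComm_tmul]
  · apply TensorProduct.ext'
    intro x y
    simp [smul_eq_mul, mul_comm]

end TensorCoalgMap
end FRTPaper

namespace FRTPaper
section HopfMaps
variable {A : Type} [Ring A] [HopfAlgebra ℂ A]

@[simp] lemma pr1_tmul (x y : A) :
    pr1 (x ⊗ₜ[ℂ] y) = Coalgebra.counit (R := ℂ) y • x := by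
  simp [pr1, TensorProduct.rid_tmul]

@[simp] lemma pr2_tmul (x y : A) :
    pr2 (x ⊗ₜ[ℂ] y) = Coalgebra.counit (R := ℂ) x • y := by
  simp [pr2, TensorProduct.lid_tmul]



lemma IsCoalgMap.pr1 : IsCoalgMap (pr1 (A := A)) := by
  constructor
  · apply TensorProduct.ext'
    intro x y
    set rx := Coalgebra.Repr.arbitrary ℂ x
    set ry := Coalgebra.Repr.arbitrary ℂ y
    rw [LinearMap.comp_apply, LinearMap.comp_apply, comul_tmul_eq rx ry, map_sum]
    simp only [pr1_tmul, map_smul, TensorProduct.map_tmul, Finset.sum_product,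
      ← TensorProduct.smul_tmul', TensorProduct.tmul_smul, smul_smul]
    rw [Finset.sum_comm]
    have : ∀ j ∈ ry.index, ∑ i ∈ rx.index,
        (Coalgebra.counit (R := ℂ) (ry.right j) * Coalgebra.counit (R := ℂ) (ry.left j)) •
          (rx.left i ⊗ₜ[ℂ] rx.right i)
        = (Coalgebra.counit (R := ℂ) (ry.right j) * Coalgebra.counit (R := ℂ) (ry.left j)) •
            Coalgebra.comul (R := ℂ) x := by
      intro j _
      rw [← Finset.smul_sum, rx.eq]
    rw [Finset.sum_congr rfl this, ← Finset.sum_smul]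
    have hy : ∑ j ∈ ry.index,
        Coalgebra.counit (R := ℂ) (ry.right j) * Coalgebra.counit (R := ℂ) (ry.left j)
        = Coalgebra.counit (R := ℂ) y := by
      have := sum_counit_mul ry (Coalgebra.counit (R := ℂ) (A := A))
      simpa [mul_comm] using this
    rw [hy]
  · apply TensorProduct.ext'
    intro x y
    simp [mul_comm]

lemma IsCoalgMap.pr2 : IsCoalgMap (pr2 (A := A)) := by
  constructor
  · apply TensorProduct.ext'
    intro x y
    set rx := Coalgebra.Repr.arbitrary ℂ x
    set ry := Coalgebra.Repr.arbitrary ℂ y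
    rw [LinearMap.comp_apply, LinearMap.comp_apply, comul_tmul_eq rx ry, map_sum]
    simp only [pr2_tmul, map_smul, TensorProduct.map_tmul, Finset.sum_product,
      ← TensorProduct.smul_tmul', TensorProduct.tmul_smul, smul_smul]
    have : ∀ i ∈ rx.index, ∑ j ∈ ry.index,
        (Coalgebra.counit (R := ℂ) (rx.right i) * Coalgebra.counit (R := ℂ) (rx.left i)) •
          (ry.left j ⊗ₜ[ℂ] ry.right j)
        = (Coalgebra.counit (R := ℂ) (rx.right i) * Coalgebra.counit (R := ℂ) (rx.left i)) •
            Coalgebra.comul (R := ℂ) y := by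
      intro i _
      rw [← Finset.smul_sum, ry.eq]
    rw [Finset.sum_congr rfl this, ← Finset.sum_smul]
    have hx : ∑ i ∈ rx.index,
        Coalgebra.counit (R := ℂ) (rx.right i) * Coalgebra.counit (R := ℂ) (rx.left i)
        = Coalgebra.counit (R := ℂ) x := by
      have := sum_counit_mul rx (Coalgebra.counit (R := ℂ) (A := A))
      simpa [mul_comm] using this
    rw [hx]
  · apply TensorProduct.ext'
    intro x y
    simp [mul_comm]

lemma IsCoalgMap.mul : IsCoalgMap (LinearMap.mul' ℂ A) := by
  constructor
  · apply TensorProduct.ext'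
    intro x y
    set rx := Coalgebra.Repr.arbitrary ℂ x
    set ry := Coalgebra.Repr.arbitrary ℂ y
    rw [LinearMap.comp_apply, LinearMap.comp_apply, comul_tmul_eq rx ry, map_sum,
      LinearMap.mul'_apply, Bialgebra.comul_mul, ← rx.eq, ← ry.eq, Finset.sum_mul_sum]
    simp only [TensorProduct.map_tmul, LinearMap.mul'_apply, Finset.sum_product,
      Algebra.TensorProduct.tmul_mul_tmul]
  · apply TensorProduct.ext'
    intro x y
    simp [mul_comm]

lemma IsCoalgMap.mk1 : IsCoalgMap ((TensorProduct.mk ℂ A A) 1) := by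
  constructor
  · apply LinearMap.ext
    intro x
    set rx := Coalgebra.Repr.arbitrary ℂ x
    rw [LinearMap.comp_apply, LinearMap.comp_apply, TensorProduct.mk_apply,
      comul_tmul_eq (x := (1:A)) (ι := ℕ) ⟨{0}, fun _ => (1 : A), fun _ => (1 : A), by
        simp [Bialgebra.comul_one, Algebra.TensorProduct.one_def]⟩ rx]
    rw [← rx.eq, map_sum]
    simp [Finset.sum_product]
  · apply LinearMap.ext
    intro x
    simp

lemma IsCoalgMap.mkflip1 : IsCoalgMap ((TensorProduct.mk ℂ A A).flip 1) := by
  constructor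
  · apply LinearMap.ext
    intro x
    set rx := Coalgebra.Repr.arbitrary ℂ x
    rw [LinearMap.comp_apply, LinearMap.comp_apply, LinearMap.flip_apply,
      TensorProduct.mk_apply,
      comul_tmul_eq (y := (1:A)) (κ := ℕ) rx ⟨{0}, fun _ => (1 : A), fun _ => (1 : A), by
        simp [Bialgebra.comul_one, Algebra.TensorProduct.one_def]⟩]
    rw [← rx.eq, map_sum]
    simp [Finset.sum_product]
  · apply LinearMap.ext
    intro x
    simp

end HopfMaps
end FRTPaper

namespace FRTPaper
variable {A : Type} [Ring A] [HopfAlgebra ℂ A]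

section Units
variable (q : CQT A)

lemma rcurry_eq (μ : A ⊗[ℂ] A →ₗ[ℂ] ℂ) (a : A) :
    rcurry μ a = μ ∘ₗ TensorProduct.mk ℂ A A a := rfl

lemma lcurry_eq (μ : A ⊗[ℂ] A →ₗ[ℂ] ℂ) (a : A) :
    lcurry μ a = μ ∘ₗ (TensorProduct.mk ℂ A A).flip a := rfl

lemma conv_rcurry_one_self : conv (rcurry q.r 1) (rcurry q.r 1) = rcurry q.r 1 := by
  apply LinearMap.ext
  intro c
  have := (q.r_mul_left 1 1 c).symm
  rw [one_mul] at this
  exact this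

lemma conv_lcurry_one_self : conv (lcurry q.r 1) (lcurry q.r 1) = lcurry q.r 1 := by
  apply LinearMap.ext
  intro c
  have := (q.r_mul_right c 1 1).symm
  rw [one_mul] at this
  exact this

lemma conv_rcurry_rbar_r : conv (rcurry q.rbar 1) (rcurry q.r 1) = Coalgebra.counit := by
  rw [rcurry_eq, rcurry_eq, conv_comp IsCoalgMap.mk1, q.conv_inv_right,
    IsCoalgMap.mk1.2]

lemma conv_lcurry_r_rbar : conv (lcurry q.r 1) (lcurry q.rbar 1) = Coalgebra.counit := by
  rw [lcurry_eq, lcurry_eq, conv_comp IsCoalgMap.mkflip1, q.conv_inv_left,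
    IsCoalgMap.mkflip1.2]

lemma rcurry_r_one : rcurry q.r 1 = (Coalgebra.counit : A →ₗ[ℂ] ℂ) := by
  have h1 := conv_rcurry_rbar_r q
  have h2 := conv_rcurry_one_self q
  calc rcurry q.r 1 = conv Coalgebra.counit (rcurry q.r 1) := (conv_counit_left _).symm
    _ = conv (conv (rcurry q.rbar 1) (rcurry q.r 1)) (rcurry q.r 1) := by rw [h1]
    _ = conv (rcurry q.rbar 1) (conv (rcurry q.r 1) (rcurry q.r 1)) := conv_assoc _ _ _
    _ = conv (rcurry q.rbar 1) (rcurry q.r 1) := by rw [h2]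
    _ = Coalgebra.counit := h1

lemma rcurry_rbar_one : rcurry q.rbar 1 = (Coalgebra.counit : A →ₗ[ℂ] ℂ) := by
  have h1 := conv_rcurry_rbar_r q
  rw [rcurry_r_one, conv_counit_right] at h1
  exact h1

lemma lcurry_r_one : lcurry q.r 1 = (Coalgebra.counit : A →ₗ[ℂ] ℂ) := by
  have h1 := conv_lcurry_r_rbar q
  have h2 := conv_lcurry_one_self q
  calc lcurry q.r 1 = conv (lcurry q.r 1) Coalgebra.counit := (conv_counit_right _).symm
    _ = conv (lcurry q.r 1) (conv (lcurry q.r 1) (lcurry q.rbar 1)) := by rw [h1]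
    _ = conv (conv (lcurry q.r 1) (lcurry q.r 1)) (lcurry q.rbar 1) := (conv_assoc _ _ _).symm
    _ = conv (lcurry q.r 1) (lcurry q.rbar 1) := by rw [h2]
    _ = Coalgebra.counit := h1

lemma lcurry_rbar_one : lcurry q.rbar 1 = (Coalgebra.counit : A →ₗ[ℂ] ℂ) := by
  have h1 := conv_lcurry_r_rbar q
  rw [lcurry_r_one, conv_counit_left] at h1
  exact h1

end Units
end FRTPaper

namespace FRTPaper

@[simp] lemma tprodRepr_index {B B' : Type} [AddCommGroup B] [Module ℂ B] [AddCommGroup B']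
    [Module ℂ B'] [Coalgebra ℂ B] [Coalgebra ℂ B'] {x : B} {y : B'}
    {ι κ : Type*} (rx : Coalgebra.Repr ℂ x ι) (ry : Coalgebra.Repr ℂ y κ) :
    (tprodRepr rx ry).index = rx.index ×ˢ ry.index := rfl

@[simp] lemma tprodRepr_left {B B' : Type} [AddCommGroup B] [Module ℂ B] [AddCommGroup B']
    [Module ℂ B'] [Coalgebra ℂ B] [Coalgebra ℂ B'] {x : B} {y : B'}
    {ι κ : Type*} (rx : Coalgebra.Repr ℂ x ι) (ry : Coalgebra.Repr ℂ y κ) (p : ι × κ) :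
    (tprodRepr rx ry).left p = rx.left p.1 ⊗ₜ[ℂ] ry.left p.2 := rfl

@[simp] lemma tprodRepr_right {B B' : Type} [AddCommGroup B] [Module ℂ B] [AddCommGroup B']
    [Module ℂ B'] [Coalgebra ℂ B] [Coalgebra ℂ B'] {x : B} {y : B'}
    {ι κ : Type*} (rx : Coalgebra.Repr ℂ x ι) (ry : Coalgebra.Repr ℂ y κ) (p : ι × κ) :
    (tprodRepr rx ry).right p = rx.right p.1 ⊗ₜ[ℂ] ry.right p.2 := rfl

@[simp] lemma mulRepr_index {A : Type} [Ring A] [HopfAlgebra ℂ A] {x y : A}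
    {ι κ : Type*} (rx : Coalgebra.Repr ℂ x ι) (ry : Coalgebra.Repr ℂ y κ) :
    (mulRepr rx ry).index = rx.index ×ˢ ry.index := rfl

@[simp] lemma mulRepr_left {A : Type} [Ring A] [HopfAlgebra ℂ A] {x y : A}
    {ι κ : Type*} (rx : Coalgebra.Repr ℂ x ι) (ry : Coalgebra.Repr ℂ y κ) (p : ι × κ) :
    (mulRepr rx ry).left p = rx.left p.1 * ry.left p.2 := rfl

@[simp] lemma mulRepr_right {A : Type} [Ring A] [HopfAlgebra ℂ A] {x y : A}
    {ι κ : Type*} (rx : Coalgebra.Repr ℂ x ι) (ry : Coalgebra.Repr ℂ y κ) (p : ι × κ) :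
    (mulRepr rx ry).right p = rx.right p.1 * ry.right p.2 := rfl

lemma ext3' {B1 B2 B3 M : Type} [AddCommGroup B1] [Module ℂ B1] [AddCommGroup B2] [Module ℂ B2]
    [AddCommGroup B3] [Module ℂ B3] [AddCommGroup M] [Module ℂ M]
    {f g : B1 ⊗[ℂ] (B2 ⊗[ℂ] B3) →ₗ[ℂ] M}
    (h : ∀ x y z, f (x ⊗ₜ[ℂ] (y ⊗ₜ[ℂ] z)) = g (x ⊗ₜ[ℂ] (y ⊗ₜ[ℂ] z))) : f = g := by
  apply TensorProduct.ext'
  intro x w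
  induction w using TensorProduct.induction_on with
  | zero => simp
  | tmul y z => exact h x y z
  | add w1 w2 h1 h2 => rw [TensorProduct.tmul_add, map_add, map_add, h1, h2]

end FRTPaper

namespace FRTPaper
section Structural
variable {A : Type} [Ring A] [HopfAlgebra ℂ A]

def muD : (A ⊗[ℂ] A) ⊗[ℂ] A →ₗ[ℂ] A ⊗[ℂ] A :=
  TensorProduct.map (LinearMap.mul' ℂ A) LinearMap.id

def p13 : (A ⊗[ℂ] A) ⊗[ℂ] A →ₗ[ℂ] A ⊗[ℂ] A :=
  TensorProduct.map pr1 LinearMap.id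

def p23 : (A ⊗[ℂ] A) ⊗[ℂ] A →ₗ[ℂ] A ⊗[ℂ] A :=
  TensorProduct.map pr2 LinearMap.id

def muE : A ⊗[ℂ] (A ⊗[ℂ] A) →ₗ[ℂ] A ⊗[ℂ] A :=
  TensorProduct.map LinearMap.id (LinearMap.mul' ℂ A)

def q13 : A ⊗[ℂ] (A ⊗[ℂ] A) →ₗ[ℂ] A ⊗[ℂ] A :=
  TensorProduct.map LinearMap.id pr2

def q12 : A ⊗[ℂ] (A ⊗[ℂ] A) →ₗ[ℂ] A ⊗[ℂ] A :=
  TensorProduct.map LinearMap.id pr1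

lemma icm_muD : IsCoalgMap (muD (A := A)) := IsCoalgMap.tmap IsCoalgMap.mul IsCoalgMap.id
lemma icm_p13 : IsCoalgMap (p13 (A := A)) := IsCoalgMap.tmap IsCoalgMap.pr1 IsCoalgMap.id
lemma icm_p23 : IsCoalgMap (p23 (A := A)) := IsCoalgMap.tmap IsCoalgMap.pr2 IsCoalgMap.id
lemma icm_muE : IsCoalgMap (muE (A := A)) := IsCoalgMap.tmap IsCoalgMap.id IsCoalgMap.mul
lemma icm_q13 : IsCoalgMap (q13 (A := A)) := IsCoalgMap.tmap IsCoalgMap.id IsCoalgMap.pr2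
lemma icm_q12 : IsCoalgMap (q12 (A := A)) := IsCoalgMap.tmap IsCoalgMap.id IsCoalgMap.pr1

variable (q : CQT A)

lemma ev1 : q.r ∘ₗ muD = conv (q.r ∘ₗ p13) (q.r ∘ₗ p23) := by
  symm
  apply TensorProduct.ext_threefold
  intro x y z
  have rx := Coalgebra.Repr.arbitrary ℂ x
  have ry := Coalgebra.Repr.arbitrary ℂ y
  have rz := Coalgebra.Repr.arbitrary ℂ z
  simp only [conv, LinearMap.comp_apply]
  rw [comul_tmul_eq (tprodRepr rx ry) rz, map_sum, map_sum]
  simp only [TensorProduct.map_tmul, LinearMap.mul'_apply, tprodRepr_index,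
    tprodRepr_left, tprodRepr_right]
  rw [Finset.sum_product]
  trans (∑ p ∈ rx.index ×ˢ ry.index, ∑ k ∈ rz.index,
      (Coalgebra.counit (R := ℂ) (ry.left p.2) * Coalgebra.counit (R := ℂ) (rx.right p.1)) *
      (q.r (rx.left p.1 ⊗ₜ[ℂ] rz.left k) * q.r (ry.right p.2 ⊗ₜ[ℂ] rz.right k)))
  · refine Finset.sum_congr rfl fun p _ => Finset.sum_congr rfl fun k _ => ?_
    simp only [p13, p23, LinearMap.comp_apply, TensorProduct.map_tmul, pr1_tmul, pr2_tmul,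
      LinearMap.id_apply, ← TensorProduct.smul_tmul', TensorProduct.tmul_smul,
      map_smul, smul_eq_mul]
    ring
  trans (∑ p ∈ rx.index ×ˢ ry.index,
      (Coalgebra.counit (R := ℂ) (ry.left p.2) * Coalgebra.counit (R := ℂ) (rx.right p.1)) *
        q.r ((rx.left p.1 * ry.right p.2) ⊗ₜ[ℂ] z))
  · refine Finset.sum_congr rfl fun p _ => ?_
    rw [← Finset.mul_sum]
    congr 1
    have hax := q.r_mul_left (rx.left p.1) (ry.right p.2) z
    rw [← rz.eq] at hax
    simp only [map_sum, TensorProduct.map_tmul, LinearMap.mul'_apply, rcurry,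
      LinearMap.comp_apply, TensorProduct.mk_apply] at hax
    exact hax.symm
  rw [Finset.sum_product]
  trans (∑ i ∈ rx.index, q.r ((rx.left i * y) ⊗ₜ[ℂ] z) * Coalgebra.counit (R := ℂ) (rx.right i))
  · refine Finset.sum_congr rfl fun i _ => ?_
    have hc := sum_counit_mul ry ((lcurry q.r z) ∘ₗ LinearMap.mulLeft ℂ (rx.left i))
    simp only [LinearMap.comp_apply, LinearMap.mulLeft_apply, lcurry,
      LinearMap.flip_apply, TensorProduct.mk_apply] at hc
    calc (∑ j ∈ ry.index,
        (Coalgebra.counit (R := ℂ) (ry.left j) * Coalgebra.counit (R := ℂ) (rx.right i)) *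
          q.r ((rx.left i * ry.right j) ⊗ₜ[ℂ] z))
        = (∑ j ∈ ry.index, Coalgebra.counit (R := ℂ) (ry.left j) *
            q.r ((rx.left i * ry.right j) ⊗ₜ[ℂ] z)) *
            Coalgebra.counit (R := ℂ) (rx.right i) := by
          rw [Finset.sum_mul]
          exact Finset.sum_congr rfl fun j _ => by ring
      _ = q.r ((rx.left i * y) ⊗ₜ[ℂ] z) * Coalgebra.counit (R := ℂ) (rx.right i) := by
          rw [hc]
  have hf := sum_mul_counit rx ((lcurry q.r z) ∘ₗ LinearMap.mulRight ℂ y)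
  simp only [LinearMap.comp_apply, LinearMap.mulRight_apply, lcurry,
    LinearMap.flip_apply, TensorProduct.mk_apply] at hf
  rw [hf]
  simp [muD]

lemma ev2 : q.r ∘ₗ muE = conv (q.r ∘ₗ q13) (q.r ∘ₗ q12) := by
  symm
  apply ext3'
  intro x y z
  have rx := Coalgebra.Repr.arbitrary ℂ x
  have ry := Coalgebra.Repr.arbitrary ℂ y
  have rz := Coalgebra.Repr.arbitrary ℂ z
  simp only [conv, LinearMap.comp_apply]
  rw [comul_tmul_eq rx (tprodRepr ry rz), map_sum, map_sum]
  simp only [TensorProduct.map_tmul, LinearMap.mul'_apply, tprodRepr_index,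
    tprodRepr_left, tprodRepr_right]
  rw [Finset.sum_product]
  trans (∑ i ∈ rx.index, ∑ p ∈ ry.index ×ˢ rz.index,
      (Coalgebra.counit (R := ℂ) (ry.left p.1) * Coalgebra.counit (R := ℂ) (rz.right p.2)) *
      (q.r (rx.left i ⊗ₜ[ℂ] rz.left p.2) * q.r (rx.right i ⊗ₜ[ℂ] ry.right p.1)))
  · refine Finset.sum_congr rfl fun i _ => Finset.sum_congr rfl fun p _ => ?_
    simp only [q13, q12, LinearMap.comp_apply, TensorProduct.map_tmul, pr1_tmul, pr2_tmul,
      LinearMap.id_apply, TensorProduct.tmul_smul, map_smul, smul_eq_mul]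
    ring
  trans (∑ i ∈ rx.index, q.r (rx.left i ⊗ₜ[ℂ] z) * q.r (rx.right i ⊗ₜ[ℂ] y))
  · refine Finset.sum_congr rfl fun i _ => ?_
    rw [Finset.sum_product]
    have hz := sum_mul_counit rz (rcurry q.r (rx.left i))
    simp only [rcurry, LinearMap.comp_apply, TensorProduct.mk_apply] at hz
    have hy := sum_counit_mul ry (rcurry q.r (rx.right i))
    simp only [rcurry, LinearMap.comp_apply, TensorProduct.mk_apply] at hy
    calc (∑ j ∈ ry.index, ∑ k ∈ rz.index,
        (Coalgebra.counit (R := ℂ) (ry.left j) * Coalgebra.counit (R := ℂ) (rz.right k)) *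
        (q.r (rx.left i ⊗ₜ[ℂ] rz.left k) * q.r (rx.right i ⊗ₜ[ℂ] ry.right j)))
        = (∑ j ∈ ry.index, Coalgebra.counit (R := ℂ) (ry.left j) *
              q.r (rx.right i ⊗ₜ[ℂ] ry.right j)) *
          (∑ k ∈ rz.index, q.r (rx.left i ⊗ₜ[ℂ] rz.left k) *
              Coalgebra.counit (R := ℂ) (rz.right k)) := by
          rw [Finset.sum_mul_sum]
          exact Finset.sum_congr rfl fun j _ => Finset.sum_congr rfl fun k _ => by ring
      _ = q.r (rx.left i ⊗ₜ[ℂ] z) * q.r (rx.right i ⊗ₜ[ℂ] y) := by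
          rw [hz, hy]; ring
  have hax := q.r_mul_right x y z
  rw [← rx.eq] at hax
  simp only [map_sum, TensorProduct.map_tmul, LinearMap.mul'_apply, lcurry,
    LinearMap.comp_apply, LinearMap.flip_apply, TensorProduct.mk_apply] at hax
  rw [← hax]
  simp [muE]

end Structural
end FRTPaper

namespace FRTPaper
variable {A : Type} [Ring A] [HopfAlgebra ℂ A]

section DMonoid
variable (q : CQT A)

lemma ubar_eq : conv (q.rbar ∘ₗ p23) (q.rbar ∘ₗ p13) = q.rbar ∘ₗ muD := by
  have h1 : conv (q.r ∘ₗ muD) (q.rbar ∘ₗ muD) = Coalgebra.counit := by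
    rw [conv_comp icm_muD, q.conv_inv_left, icm_muD.2]
  have h3 : conv (conv (q.rbar ∘ₗ p23) (q.rbar ∘ₗ p13)) (q.r ∘ₗ muD) = Coalgebra.counit := by
    rw [ev1, conv_assoc, ← conv_assoc (q.rbar ∘ₗ p13), conv_comp icm_p13,
      q.conv_inv_right, icm_p13.2, conv_counit_left, conv_comp icm_p23,
      q.conv_inv_right, icm_p23.2]
  calc conv (q.rbar ∘ₗ p23) (q.rbar ∘ₗ p13)
      = conv (conv (q.rbar ∘ₗ p23) (q.rbar ∘ₗ p13)) Coalgebra.counit :=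
        (conv_counit_right _).symm
    _ = conv (conv (q.rbar ∘ₗ p23) (q.rbar ∘ₗ p13)) (conv (q.r ∘ₗ muD) (q.rbar ∘ₗ muD)) := by
        rw [h1]
    _ = conv (conv (conv (q.rbar ∘ₗ p23) (q.rbar ∘ₗ p13)) (q.r ∘ₗ muD)) (q.rbar ∘ₗ muD) :=
        (conv_assoc _ _ _).symm
    _ = conv Coalgebra.counit (q.rbar ∘ₗ muD) := by rw [h3]
    _ = q.rbar ∘ₗ muD := conv_counit_left _

/-- Pointwise form: `r̄(uv ⊗ z) = Σ r̄(v⊗z₁) r̄(u⊗z₂)`. -/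
lemma rbar_mul (u v z : A) {ι : Type*} (rz : Coalgebra.Repr ℂ z ι) :
    q.rbar ((u * v) ⊗ₜ[ℂ] z)
      = ∑ k ∈ rz.index, q.rbar (v ⊗ₜ[ℂ] rz.left k) * q.rbar (u ⊗ₜ[ℂ] rz.right k) := by
  have h := congrArg (fun (f : (A ⊗[ℂ] A) ⊗[ℂ] A →ₗ[ℂ] ℂ) => f ((u ⊗ₜ[ℂ] v) ⊗ₜ[ℂ] z))
    (ubar_eq q)
  have hL : (q.rbar ∘ₗ muD) ((u ⊗ₜ[ℂ] v) ⊗ₜ[ℂ] z) = q.rbar ((u * v) ⊗ₜ[ℂ] z) := by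
    simp [muD]
  rw [hL] at h
  rw [← h]
  have ru := Coalgebra.Repr.arbitrary ℂ u
  have rv := Coalgebra.Repr.arbitrary ℂ v
  simp only [conv, LinearMap.comp_apply]
  rw [comul_tmul_eq (tprodRepr ru rv) rz, map_sum, map_sum]
  simp only [TensorProduct.map_tmul, LinearMap.mul'_apply, tprodRepr_index,
    tprodRepr_left, tprodRepr_right]
  rw [Finset.sum_product]
  trans (∑ p ∈ ru.index ×ˢ rv.index, ∑ k ∈ rz.index,
      (Coalgebra.counit (R := ℂ) (ru.left p.1) * q.rbar (rv.left p.2 ⊗ₜ[ℂ] rz.left k)) *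
      (Coalgebra.counit (R := ℂ) (rv.right p.2) * q.rbar (ru.right p.1 ⊗ₜ[ℂ] rz.right k)))
  · refine Finset.sum_congr rfl fun p _ => Finset.sum_congr rfl fun k _ => ?_
    simp only [p13, p23, LinearMap.comp_apply, TensorProduct.map_tmul, pr1_tmul, pr2_tmul,
      LinearMap.id_apply, ← TensorProduct.smul_tmul', TensorProduct.tmul_smul,
      map_smul, smul_eq_mul]
    try ring
  rw [Finset.sum_comm]
  refine Finset.sum_congr rfl fun k _ => ?_
  rw [Finset.sum_product]
  have hu := sum_counit_mul ru (lcurry q.rbar (rz.right k))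
  simp only [lcurry, LinearMap.comp_apply, LinearMap.flip_apply, TensorProduct.mk_apply] at hu
  have hv := sum_mul_counit rv (lcurry q.rbar (rz.left k))
  simp only [lcurry, LinearMap.comp_apply, LinearMap.flip_apply, TensorProduct.mk_apply] at hv
  calc (∑ i ∈ ru.index, ∑ j ∈ rv.index,
      (Coalgebra.counit (R := ℂ) (ru.left i) * q.rbar (rv.left j ⊗ₜ[ℂ] rz.left k)) *
      (Coalgebra.counit (R := ℂ) (rv.right j) * q.rbar (ru.right i ⊗ₜ[ℂ] rz.right k)))
      = (∑ i ∈ ru.index, Coalgebra.counit (R := ℂ) (ru.left i) *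
            q.rbar (ru.right i ⊗ₜ[ℂ] rz.right k)) *
        (∑ j ∈ rv.index, q.rbar (rv.left j ⊗ₜ[ℂ] rz.left k) *
            Coalgebra.counit (R := ℂ) (rv.right j)) := by
        rw [Finset.sum_mul_sum]
        exact Finset.sum_congr rfl fun i _ => Finset.sum_congr rfl fun j _ => by ring
    _ = q.rbar (v ⊗ₜ[ℂ] rz.left k) * q.rbar (u ⊗ₜ[ℂ] rz.right k) := by
        rw [hu, hv]; ring

end DMonoid

section GoalOne
variable (q : CQT A)

def sig : (A ⊗[ℂ] A) ⊗[ℂ] (A ⊗[ℂ] A) →ₗ[ℂ] (A ⊗[ℂ] A) ⊗[ℂ] A :=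
  (TensorProduct.comm ℂ A (A ⊗[ℂ] A)).toLinearMap ∘ₗ TensorProduct.map pr1 LinearMap.id

def psi : (A ⊗[ℂ] A) ⊗[ℂ] (A ⊗[ℂ] A) →ₗ[ℂ] A ⊗[ℂ] (A ⊗[ℂ] A) :=
  TensorProduct.map pr2 LinearMap.id

lemma icm_sig : IsCoalgMap (sig (A := A)) :=
  IsCoalgMap.comp IsCoalgMap.comm (IsCoalgMap.tmap IsCoalgMap.pr1 IsCoalgMap.id)

lemma icm_psi : IsCoalgMap (psi (A := A)) :=
  IsCoalgMap.tmap IsCoalgMap.pr2 IsCoalgMap.id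

lemma leg41_eq : leg41 q.rbar = (q.rbar ∘ₗ p23) ∘ₗ sig := by
  apply TensorProduct.ext_fourfold'
  intro a b c d
  simp [leg41, sig, p23, TensorProduct.smul_tmul', TensorProduct.tmul_smul, smul_smul, mul_comm]

lemma leg31_eq : leg31 q.rbar = (q.rbar ∘ₗ p13) ∘ₗ sig := by
  apply TensorProduct.ext_fourfold'
  intro a b c d
  simp [leg31, sig, p13, TensorProduct.smul_tmul', TensorProduct.tmul_smul, smul_smul, mul_comm]

lemma leg24_eq : leg24 q.r = (q.r ∘ₗ q13) ∘ₗ psi := by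
  apply TensorProduct.ext_fourfold'
  intro a b c d
  simp [leg24, psi, q13, TensorProduct.smul_tmul', TensorProduct.tmul_smul, smul_smul, mul_comm]

lemma leg23_eq : leg23 q.r = (q.r ∘ₗ q12) ∘ₗ psi := by
  apply TensorProduct.ext_fourfold'
  intro a b c d
  simp [leg23, psi, q12, TensorProduct.smul_tmul', TensorProduct.tmul_smul, smul_smul, mul_comm]

lemma rhat_eq_FG : rhat q = conv ((q.rbar ∘ₗ muD) ∘ₗ sig) ((q.r ∘ₗ muE) ∘ₗ psi) := by
  rw [rhat, conv_assoc (conv (leg41 q.rbar) (leg31 q.rbar))]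
  congr 1
  · rw [leg41_eq, leg31_eq, conv_comp icm_sig, ubar_eq]
  · rw [leg24_eq, leg23_eq, conv_comp icm_psi, ev2]

end GoalOne
end FRTPaper

namespace FRTPaper
variable {A : Type} [Ring A] [HopfAlgebra ℂ A]

lemma goal1 (q : CQT A) (a b c d : A) :
    rhat q ((a ⊗ₜ[ℂ] b) ⊗ₜ[ℂ] (c ⊗ₜ[ℂ] d))
      = conv (lcurry q.rbar a) (rcurry q.r b) (c * d) := by
  rw [rhat_eq_FG]
  have ra := Coalgebra.Repr.arbitrary ℂ a
  have rb := Coalgebra.Repr.arbitrary ℂ b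
  have rc := Coalgebra.Repr.arbitrary ℂ c
  have rd := Coalgebra.Repr.arbitrary ℂ d
  -- right hand side
  have hRHS : conv (lcurry q.rbar a) (rcurry q.r b) (c * d)
      = ∑ m ∈ rc.index ×ˢ rd.index,
          q.rbar ((rc.left m.1 * rd.left m.2) ⊗ₜ[ℂ] a) *
          q.r (b ⊗ₜ[ℂ] (rc.right m.1 * rd.right m.2)) := by
    simp only [conv, LinearMap.comp_apply]
    rw [← (mulRepr rc rd).eq, map_sum, map_sum]
    simp only [TensorProduct.map_tmul, LinearMap.mul'_apply, mulRepr_index,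
      mulRepr_left, mulRepr_right, lcurry, rcurry, LinearMap.comp_apply,
      LinearMap.flip_apply, TensorProduct.mk_apply]
  rw [hRHS]
  simp only [conv, LinearMap.comp_apply]
  rw [comul_tmul_eq (tprodRepr ra rb) (tprodRepr rc rd), map_sum, map_sum]
  simp only [TensorProduct.map_tmul, LinearMap.mul'_apply, tprodRepr_index,
    tprodRepr_left, tprodRepr_right]
  rw [Finset.sum_product]
  trans (∑ p ∈ ra.index ×ˢ rb.index, ∑ m ∈ rc.index ×ˢ rd.index,
      (q.rbar ((rc.left m.1 * rd.left m.2) ⊗ₜ[ℂ] ra.left p.1) *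
        Coalgebra.counit (R := ℂ) (ra.right p.1)) *
      (Coalgebra.counit (R := ℂ) (rb.left p.2) *
        q.r (rb.right p.2 ⊗ₜ[ℂ] (rc.right m.1 * rd.right m.2))))
  · refine Finset.sum_congr rfl fun p _ => Finset.sum_congr rfl fun m _ => ?_
    simp only [sig, psi, muD, muE, LinearMap.comp_apply, TensorProduct.map_tmul,
      pr1_tmul, pr2_tmul, LinearMap.id_apply, ← TensorProduct.smul_tmul',
      TensorProduct.tmul_smul, map_smul, smul_eq_mul, LinearEquiv.coe_coe,
      TensorProduct.comm_tmul, LinearMap.mul'_apply]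
    try ring
  rw [Finset.sum_comm]
  refine Finset.sum_congr rfl fun m _ => ?_
  rw [Finset.sum_product]
  have ha := sum_mul_counit ra (rcurry q.rbar (rc.left m.1 * rd.left m.2))
  simp only [rcurry, LinearMap.comp_apply, TensorProduct.mk_apply] at ha
  have hb := sum_counit_mul rb (lcurry q.r (rc.right m.1 * rd.right m.2))
  simp only [lcurry, LinearMap.comp_apply, LinearMap.flip_apply,
    TensorProduct.mk_apply] at hb
  calc (∑ i ∈ ra.index, ∑ j ∈ rb.index,
      (q.rbar ((rc.left m.1 * rd.left m.2) ⊗ₜ[ℂ] ra.left i) *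
        Coalgebra.counit (R := ℂ) (ra.right i)) *
      (Coalgebra.counit (R := ℂ) (rb.left j) *
        q.r (rb.right j ⊗ₜ[ℂ] (rc.right m.1 * rd.right m.2))))
      = (∑ i ∈ ra.index, q.rbar ((rc.left m.1 * rd.left m.2) ⊗ₜ[ℂ] ra.left i) *
            Coalgebra.counit (R := ℂ) (ra.right i)) *
        (∑ j ∈ rb.index, Coalgebra.counit (R := ℂ) (rb.left j) *
            q.r (rb.right j ⊗ₜ[ℂ] (rc.right m.1 * rd.right m.2))) := by
        rw [Finset.sum_mul_sum]
    _ = q.rbar ((rc.left m.1 * rd.left m.2) ⊗ₜ[ℂ] a) *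
          q.r (b ⊗ₜ[ℂ] (rc.right m.1 * rd.right m.2)) := by
        rw [ha, hb]

end FRTPaper

namespace FRTPaper
section AconvExtra
variable {B B' : Type} [AddCommGroup B] [Module ℂ B] [AddCommGroup B'] [Module ℂ B']
  [Coalgebra ℂ B] [Coalgebra ℂ B']
variable {M : Type} [Ring M] [Algebra ℂ M]

lemma aconv_comp {φ : B →ₗ[ℂ] B'} (hφ : IsCoalgMap φ) (f g : B' →ₗ[ℂ] M) :
    aconv (f ∘ₗ φ) (g ∘ₗ φ) = (aconv f g) ∘ₗ φ := by
  unfold aconv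
  rw [TensorProduct.map_comp, LinearMap.comp_assoc, LinearMap.comp_assoc, ← hφ.1]
  rfl

lemma cunit_comp {φ : B →ₗ[ℂ] B'} (hφ : IsCoalgMap φ) :
    (cunit : B' →ₗ[ℂ] M) ∘ₗ φ = cunit := by
  unfold cunit
  rw [LinearMap.comp_assoc, hφ.2]

lemma aconv_inv_unique {f g h : B →ₗ[ℂ] M}
    (hfg : aconv f g = cunit) (hgh : aconv g h = cunit) : f = h :=
  calc f = aconv f cunit := (aconv_cunit_right f).symm
    _ = aconv f (aconv g h) := by rw [hgh]
    _ = aconv (aconv f g) h := (aconv_assoc f g h).symm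
    _ = aconv cunit h := by rw [hfg]
    _ = h := aconv_cunit_left h

end AconvExtra

section Antipode
variable {A : Type} [Ring A] [HopfAlgebra ℂ A]

local notation "S" => (HopfAlgebra.antipode (R := ℂ) (A := A))

/-- `ν (x ⊗ y) = S(y) S(x)`. -/
def nus : A ⊗[ℂ] A →ₗ[ℂ] A :=
  LinearMap.mul' ℂ A ∘ₗ TensorProduct.map S S ∘ₗ (TensorProduct.comm ℂ A A).toLinearMap

lemma aconv_id_S : aconv (LinearMap.id : A →ₗ[ℂ] A) S = cunit := by
  have := HopfAlgebra.mul_antipode_lTensor_comul (R := ℂ) (A := A)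
  unfold aconv cunit
  rw [← this]
  rfl

lemma aconv_S_id : aconv S (LinearMap.id : A →ₗ[ℂ] A) = cunit := by
  have := HopfAlgebra.mul_antipode_rTensor_comul (R := ℂ) (A := A)
  unfold aconv cunit
  rw [← this]
  rfl

lemma aconv_mul_Smul :
    aconv (LinearMap.mul' ℂ A) (S ∘ₗ LinearMap.mul' ℂ A) = cunit := by
  have h : (LinearMap.mul' ℂ A) = LinearMap.id ∘ₗ (LinearMap.mul' ℂ A) := rfl
  calc aconv (LinearMap.mul' ℂ A) (S ∘ₗ LinearMap.mul' ℂ A)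
      = aconv (LinearMap.id ∘ₗ LinearMap.mul' ℂ A) (S ∘ₗ LinearMap.mul' ℂ A) := by rw [← h]
    _ = (aconv LinearMap.id S) ∘ₗ LinearMap.mul' ℂ A := aconv_comp IsCoalgMap.mul _ _
    _ = cunit := by rw [aconv_id_S, cunit_comp IsCoalgMap.mul]

lemma aconv_nus_mul : aconv (nus (A := A)) (LinearMap.mul' ℂ A) = cunit := by
  apply TensorProduct.ext'
  intro x y
  have rx := Coalgebra.Repr.arbitrary ℂ x
  have ry := Coalgebra.Repr.arbitrary ℂ y
  simp only [aconv, LinearMap.comp_apply]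
  rw [comul_tmul_eq rx ry, map_sum, map_sum]
  simp only [TensorProduct.map_tmul, LinearMap.mul'_apply, nus, LinearMap.comp_apply,
    LinearEquiv.coe_coe, TensorProduct.comm_tmul]
  rw [Finset.sum_product, Finset.sum_comm]
  trans (∑ j ∈ ry.index, S (ry.left j) *
      ((∑ i ∈ rx.index, S (rx.left i) * rx.right i) * ry.right j))
  · refine Finset.sum_congr rfl fun j _ => ?_
    rw [Finset.sum_mul, Finset.mul_sum]
    refine Finset.sum_congr rfl fun i _ => ?_
    simp only [mul_assoc]
  rw [HopfAlgebra.sum_antipode_mul_eq_algebraMap_counit rx]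
  trans (∑ j ∈ ry.index, Coalgebra.counit (R := ℂ) x • (S (ry.left j) * ry.right j))
  · refine Finset.sum_congr rfl fun j _ => ?_
    rw [Algebra.smul_def, ← mul_assoc, ← Algebra.commutes, mul_assoc]
  rw [← Finset.smul_sum, HopfAlgebra.sum_antipode_mul_eq_algebraMap_counit ry]
  show Coalgebra.counit (R := ℂ) x • algebraMap ℂ A (Coalgebra.counit (R := ℂ) y)
      = cunit (x ⊗ₜ[ℂ] y)
  simp only [cunit, LinearMap.comp_apply, Algebra.linearMap_apply,
    TensorProduct.counit_tmul, smul_eq_mul, TensorProduct.map_tmul,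
    LinearMap.mul'_apply, Algebra.smul_def, ← map_mul]
  try rw [mul_comm]

lemma Smul_eq_nus : S ∘ₗ LinearMap.mul' ℂ A = nus :=
  (aconv_inv_unique (aconv_nus_mul (A := A)) (aconv_mul_Smul (A := A))).symm

lemma antipode_mul (x y : A) : S (x * y) = S y * S x := by
  have := congrArg (fun (f : A ⊗[ℂ] A →ₗ[ℂ] A) => f (x ⊗ₜ[ℂ] y)) Smul_eq_nus
  simpa [nus] using this

lemma antipode_one : S (1 : A) = 1 := by
  have := HopfAlgebra.mul_antipode_rTensor_comul_apply (R := ℂ) (a := (1 : A))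
  rw [Bialgebra.comul_one, Algebra.TensorProduct.one_def] at this
  simpa using this

lemma antipode_algebraMap (c : ℂ) : S (algebraMap ℂ A c) = algebraMap ℂ A c := by
  rw [Algebra.algebraMap_eq_smul_one, map_smul, antipode_one]

section SInv

lemma antipode_injective (Sinv : A →ₗ[ℂ] A)
    (hS₂ : ∀ x : A, Sinv (HopfAlgebra.antipode (R := ℂ) x) = x)
    {u v : A} (h : S u = S v) : u = v := by
  have := congrArg Sinv h
  rwa [hS₂, hS₂] at this

lemma H1 (Sinv : A →ₗ[ℂ] A)
    (hS₁ : ∀ x : A, HopfAlgebra.antipode (R := ℂ) (Sinv x) = x)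
    (hS₂ : ∀ x : A, Sinv (HopfAlgebra.antipode (R := ℂ) x) = x)
    {y : A} {ι : Type*} (ry : Coalgebra.Repr ℂ y ι) :
    ∑ k ∈ ry.index, ry.right k * Sinv (ry.left k)
      = algebraMap ℂ A (Coalgebra.counit (R := ℂ) y) := by
  apply antipode_injective Sinv hS₂
  rw [map_sum, antipode_algebraMap]
  calc ∑ k ∈ ry.index, S (ry.right k * Sinv (ry.left k))
      = ∑ k ∈ ry.index, ry.left k * S (ry.right k) := by
        refine Finset.sum_congr rfl fun k _ => ?_
        rw [antipode_mul, hS₁]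
    _ = algebraMap ℂ A (Coalgebra.counit (R := ℂ) y) := HopfAlgebra.sum_mul_antipode_eq_algebraMap_counit ry

lemma H2 (Sinv : A →ₗ[ℂ] A)
    (hS₁ : ∀ x : A, HopfAlgebra.antipode (R := ℂ) (Sinv x) = x)
    (hS₂ : ∀ x : A, Sinv (HopfAlgebra.antipode (R := ℂ) x) = x)
    {y : A} {ι : Type*} (ry : Coalgebra.Repr ℂ y ι) :
    ∑ k ∈ ry.index, Sinv (ry.right k) * ry.left k
      = algebraMap ℂ A (Coalgebra.counit (R := ℂ) y) := by
  apply antipode_injective Sinv hS₂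
  rw [map_sum, antipode_algebraMap]
  calc ∑ k ∈ ry.index, S (Sinv (ry.right k) * ry.left k)
      = ∑ k ∈ ry.index, S (ry.left k) * ry.right k := by
        refine Finset.sum_congr rfl fun k _ => ?_
        rw [antipode_mul, hS₁]
    _ = algebraMap ℂ A (Coalgebra.counit (R := ℂ) y) := HopfAlgebra.sum_antipode_mul_eq_algebraMap_counit ry

end SInv
end Antipode
end FRTPaper

namespace FRTPaper
variable {A : Type} [Ring A] [HopfAlgebra ℂ A]

section GoalTwo
variable (q : CQT A) (Sinv : A →ₗ[ℂ] A)

lemma conv_w_r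
    (hS₁ : ∀ x : A, HopfAlgebra.antipode (R := ℂ) (Sinv x) = x)
    (hS₂ : ∀ x : A, Sinv (HopfAlgebra.antipode (R := ℂ) x) = x) :
    conv (q.r ∘ₗ LinearMap.lTensor A Sinv) q.r
    = (Coalgebra.counit : A ⊗[ℂ] A →ₗ[ℂ] ℂ) := by
  apply TensorProduct.ext'
  intro x y
  have rx := Coalgebra.Repr.arbitrary ℂ x
  have ry := Coalgebra.Repr.arbitrary ℂ y
  simp only [conv, LinearMap.comp_apply]
  rw [comul_tmul_eq rx ry, map_sum, map_sum]
  simp only [TensorProduct.map_tmul, LinearMap.mul'_apply, LinearMap.comp_apply,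
    LinearMap.lTensor_tmul]
  rw [Finset.sum_product, Finset.sum_comm]
  trans (∑ k ∈ ry.index, q.r (x ⊗ₜ[ℂ] (ry.right k * Sinv (ry.left k))))
  · refine Finset.sum_congr rfl fun k _ => ?_
    have hax := q.r_mul_right x (ry.right k) (Sinv (ry.left k))
    rw [← rx.eq] at hax
    simp only [map_sum, TensorProduct.map_tmul, LinearMap.mul'_apply, lcurry,
      LinearMap.comp_apply, LinearMap.flip_apply, TensorProduct.mk_apply] at hax
    exact hax.symm
  have hsum : ∑ k ∈ ry.index, q.r (x ⊗ₜ[ℂ] (ry.right k * Sinv (ry.left k)))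
      = q.r (x ⊗ₜ[ℂ] algebraMap ℂ A (Coalgebra.counit (R := ℂ) y)) := by
    rw [← H1 Sinv hS₁ hS₂ ry, TensorProduct.tmul_sum, map_sum]
  rw [hsum]
  have h1 : q.r (x ⊗ₜ[ℂ] (1 : A)) = Coalgebra.counit (R := ℂ) x := by
    have := congrArg (fun (f : A →ₗ[ℂ] ℂ) => f x) (lcurry_r_one q)
    simpa [lcurry] using this
  rw [Algebra.algebraMap_eq_smul_one, TensorProduct.tmul_smul, map_smul, h1]
  simp [TensorProduct.counit_tmul, smul_eq_mul, mul_comm]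

lemma rbar_eq_r_Sinv
    (hS₁ : ∀ x : A, HopfAlgebra.antipode (R := ℂ) (Sinv x) = x)
    (hS₂ : ∀ x : A, Sinv (HopfAlgebra.antipode (R := ℂ) x) = x) :
    q.rbar = q.r ∘ₗ LinearMap.lTensor A Sinv :=
  (conv_inv_unique (conv_w_r q Sinv hS₁ hS₂) q.conv_inv_left).symm

lemma conv_rbar_z
    (hS₁ : ∀ x : A, HopfAlgebra.antipode (R := ℂ) (Sinv x) = x)
    (hS₂ : ∀ x : A, Sinv (HopfAlgebra.antipode (R := ℂ) x) = x) :
    conv q.rbar (q.rbar ∘ₗ LinearMap.rTensor A Sinv)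
    = (Coalgebra.counit : A ⊗[ℂ] A →ₗ[ℂ] ℂ) := by
  apply TensorProduct.ext'
  intro x y
  have rx := Coalgebra.Repr.arbitrary ℂ x
  have ry := Coalgebra.Repr.arbitrary ℂ y
  simp only [conv, LinearMap.comp_apply]
  rw [comul_tmul_eq rx ry, map_sum, map_sum]
  simp only [TensorProduct.map_tmul, LinearMap.mul'_apply, LinearMap.comp_apply,
    LinearMap.rTensor_tmul]
  rw [Finset.sum_product]
  trans (∑ i ∈ rx.index, q.rbar ((Sinv (rx.right i) * rx.left i) ⊗ₜ[ℂ] y))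
  · refine Finset.sum_congr rfl fun i _ => ?_
    exact (rbar_mul q (Sinv (rx.right i)) (rx.left i) y ry).symm
  have hsum : ∑ i ∈ rx.index, q.rbar ((Sinv (rx.right i) * rx.left i) ⊗ₜ[ℂ] y)
      = q.rbar ((algebraMap ℂ A (Coalgebra.counit (R := ℂ) x)) ⊗ₜ[ℂ] y) := by
    rw [← H2 Sinv hS₁ hS₂ rx, TensorProduct.sum_tmul, map_sum]
  rw [hsum]
  have h1 : q.rbar ((1 : A) ⊗ₜ[ℂ] y) = Coalgebra.counit (R := ℂ) y := by
    have := congrArg (fun (f : A →ₗ[ℂ] ℂ) => f y) (rcurry_rbar_one q)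
    simpa [rcurry] using this
  rw [Algebra.algebraMap_eq_smul_one, ← TensorProduct.smul_tmul', map_smul, h1]
  simp [TensorProduct.counit_tmul, smul_eq_mul, mul_comm]

lemma r_eq_rbar_Sinv
    (hS₁ : ∀ x : A, HopfAlgebra.antipode (R := ℂ) (Sinv x) = x)
    (hS₂ : ∀ x : A, Sinv (HopfAlgebra.antipode (R := ℂ) x) = x) :
    q.r = q.rbar ∘ₗ LinearMap.rTensor A Sinv :=
  conv_inv_unique q.conv_inv_left (conv_rbar_z q Sinv hS₁ hS₂)

end GoalTwo
end FRTPaper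



namespace FRTPaper

/-!
STATEMENT 0: Let `(A, r)` be a coquasitriangular Hopf algebra over `ℂ` and let
`r̂ := r̄₄₁ r̄₃₁ r₂₄ r₂₃` be the universal r-form on the quantum double `A ⋈ A`.
Then for all `a,b,c,d ∈ A` one has
`r̂((a⊗b)⊗(c⊗d)) = r̄(c₍₁₎d₍₁₎ ⊗ a) · r(b ⊗ c₍₂₎d₍₂₎) = ⟨θ(a⊗b), cd⟩`,
where `θ(a⊗b) := l⁺(S⁻¹(a)) l⁻(S⁻¹(b))`.

Here the middle term is expressed, using that `Δ` is an algebra map, as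
`Σ r̄((cd)₍₁₎ ⊗ a) · r(b ⊗ (cd)₍₂₎)`, and `⟨θ(a⊗b), cd⟩` is the convolution product
`l⁺(S⁻¹(a)) * l⁻(S⁻¹(b))` evaluated at `cd`. -/
theorem rhat_eq_theta_pairing
    (A : Type) [Ring A] [HopfAlgebra ℂ A] (q : CQT A)
    (Sinv : A →ₗ[ℂ] A)
    (hS₁ : ∀ x : A, HopfAlgebra.antipode (R := ℂ) (Sinv x) = x)
    (hS₂ : ∀ x : A, Sinv (HopfAlgebra.antipode (R := ℂ) x) = x) :
    ∀ a b c d : A,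
      rhat q ((a ⊗ₜ[ℂ] b) ⊗ₜ[ℂ] (c ⊗ₜ[ℂ] d))
          = conv (lcurry q.rbar a) (rcurry q.r b) (c * d)
      ∧ conv (lcurry q.rbar a) (rcurry q.r b) (c * d)
          = conv (lp q (Sinv a)) (lm q (Sinv b)) (c * d) := by
  intro a b c d
  refine ⟨goal1 q a b c d, ?_⟩
  have h1 : lcurry q.rbar a = lp q (Sinv a) := by
    rw [lp, rbar_eq_r_Sinv q Sinv hS₁ hS₂]
    apply LinearMap.ext
    intro x
    simp [lcurry]
  have h2 : rcurry q.r b = lm q (Sinv b) := by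
    rw [lm, r_eq_rbar_Sinv q Sinv hS₁ hS₂]
    apply LinearMap.ext
    intro x
    simp [rcurry]
  rw [h1, h2]

end FRTPaper
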